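/- Let f : S₁ × S₂ → ℤ be order-preserving (f(x',y') ≥ f(x,y) whenever x' ≥ x, y' ≥ y), and let f̃ be its extension to well-tempered scoring games. If G₁ ≳ H₁ (S₁-valued) and G₂ ≳ H₂ (S₂-valued), then f̃(G₁,G₂) ≳ f̃(H₁,H₂). -/

import Mathlib

/-- Well-tempered scoring game trees: an integer (final score) or a position
with lists of Left and Right options. -/
inductive WT : Type where
  | int : ℤ → WT
  | node : List WT → List WT → WT

namespace WT

/-- Left options. -/
def lopts : WT → List WT
  | int _ => []
  | node L _ => L

/-- Right options. -/
def ropts : WT → List WT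
  | int _ => []
  | node _ R => R

theorem sizeOf_lt_of_mem_lopts : ∀ {G g : WT}, g ∈ G.lopts → sizeOf g < sizeOf G := by
  intro G g h
  cases G with
  | int n => simp [lopts] at h
  | node L R =>
    simp only [lopts] at h
    have h1 := List.sizeOf_lt_of_mem h
    have h2 : sizeOf (WT.node L R) = 1 + sizeOf L + sizeOf R := by simp
    omega

theorem sizeOf_lt_of_mem_ropts : ∀ {G g : WT}, g ∈ G.ropts → sizeOf g < sizeOf G := by
  intro G g h
  cases G with
  | int n => simp [ropts] at h
  | node L R =>
    simp only [ropts] at h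
    have h1 := List.sizeOf_lt_of_mem h
    have h2 : sizeOf (WT.node L R) = 1 + sizeOf L + sizeOf R := by simp
    omega

/-- Disjunctive sum of two games. -/
def add (G H : WT) : WT :=
  match G, H with
  | int m, int n => int (m + n)
  | G, H =>
    node ((G.lopts.attach.map fun g => add g.1 H) ++ (H.lopts.attach.map fun h => add G h.1))
         ((G.ropts.attach.map fun g => add g.1 H) ++ (H.ropts.attach.map fun h => add G h.1))
termination_by sizeOf G + sizeOf H
decreasing_by
  all_goals
    first
      | (have := sizeOf_lt_of_mem_lopts g.2; omega)
      | (have := sizeOf_lt_of_mem_lopts h.2; omega)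
      | (have := sizeOf_lt_of_mem_ropts g.2; omega)
      | (have := sizeOf_lt_of_mem_ropts h.2; omega)

/-- Negation of a game: swap players and negate scores. -/
def neg : WT → WT
  | int n => int (-n)
  | node L R =>
    node ((WT.node L R).ropts.attach.map fun g => neg g.1)
         ((WT.node L R).lopts.attach.map fun g => neg g.1)
termination_by G => sizeOf G
decreasing_by
  all_goals
    first
      | exact sizeOf_lt_of_mem_lopts g.2
      | exact sizeOf_lt_of_mem_ropts g.2

def lmax : List ℤ → ℤ
  | [] => 0
  | x :: xs => xs.foldl max x

def lmin : List ℤ → ℤ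
  | [] => 0
  | x :: xs => xs.foldl min x

/-- The pair (left outcome, right outcome). -/
def out : WT → ℤ × ℤ
  | int n => (n, n)
  | node L R =>
    (lmax ((WT.node L R).lopts.attach.map fun g => (out g.1).2),
     lmin ((WT.node L R).ropts.attach.map fun g => (out g.1).1))
termination_by G => sizeOf G
decreasing_by
  all_goals
    first
      | exact sizeOf_lt_of_mem_lopts g.2
      | exact sizeOf_lt_of_mem_ropts g.2

/-- Left outcome L(G): optimal score when Left moves first. -/
def Lout (G : WT) : ℤ := G.out.1

/-- Right outcome R(G): optimal score when Right moves first. -/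
def Rout (G : WT) : ℤ := G.out.2

/-- `IsWT G p` : `G` is a well-tempered game of parity `p`
(`false` = even-tempered, `true` = odd-tempered). -/
inductive IsWT : WT → Bool → Prop where
  | int (n : ℤ) : IsWT (WT.int n) false
  | node {L R : List WT} {p : Bool} (hL : L ≠ []) (hR : R ≠ [])
      (hLp : ∀ g ∈ L, IsWT g p) (hRp : ∀ g ∈ R, IsWT g p) :
      IsWT (WT.node L R) (!p)

/-- `G` is a well-tempered game (of some parity). -/
def Wt (G : WT) : Prop := ∃ p, IsWT G p

/-- Parity, computed structurally (`false` = even-tempered, `true` = odd-tempered;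
agrees with `IsWT` on well-tempered games). -/
def par : WT → Bool
  | int _ => false
  | node [] _ => true
  | node (g :: _) _ => !(par g)

/-- Final score under optimal play when Left moves last. -/
def Lf (G : WT) : ℤ := if G.par then G.Lout else G.Rout

/-- Final score under optimal play when Right moves last. -/
def Rf (G : WT) : ℤ := if G.par then G.Rout else G.Lout

/-- `G ≲ H` : for every well-tempered `X`, `L(G+X) ≤ L(H+X)` and `R(G+X) ≤ R(H+X)`. -/
def Le (G H : WT) : Prop :=
  ∀ X : WT, X.Wt → (G.add X).Lout ≤ (H.add X).Lout ∧ (G.add X).Rout ≤ (H.add X).Rout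

/-- `G ≳ H`. -/
def Ge (G H : WT) : Prop := Le H G

/-- `G ≈ H` : equivalence of scoring games. -/
def Equiv (G H : WT) : Prop :=
  ∀ X : WT, X.Wt → (G.add X).Lout = (H.add X).Lout ∧ (G.add X).Rout = (H.add X).Rout

/-- `G` and `H` are well-tempered with the same parity. -/
def SamePar (G H : WT) : Prop := ∃ p, IsWT G p ∧ IsWT H p

/-- `G` takes values in `S`: every integer subgame lies in `S`. -/
inductive Valued (S : Set ℤ) : WT → Prop where
  | int {n : ℤ} : n ∈ S → Valued S (WT.int n)
  | node {L R : List WT} : (∀ g ∈ L, Valued S g) → (∀ g ∈ R, Valued S g) →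
      Valued S (WT.node L R)

/-- `Subgame H G` : `H` is a subgame of `G`. -/
inductive Subgame : WT → WT → Prop where
  | refl (G : WT) : Subgame G G
  | left {H G' : WT} {L R : List WT} : G' ∈ L → Subgame H G' → Subgame H (WT.node L R)
  | right {H G' : WT} {L R : List WT} : G' ∈ R → Subgame H G' → Subgame H (WT.node L R)

/-- `gap G p` : supremum of `R(H) - L(H)` over subgames `H` of `G` of parity `p`
(as an element of `WithBot ℤ`; the supremum of the empty set is `⊥ = -∞`). -/
noncomputable def gap (G : WT) (p : Bool) : WithBot ℤ :=
  sSup {x : WithBot ℤ | ∃ H : WT, Subgame H G ∧ IsWT H p ∧ x = ((H.Rout - H.Lout : ℤ) : WithBot ℤ)}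

/-- Heating by `t`. -/
def heat (t : ℤ) : WT → WT
  | int n => int n
  | node L R =>
    node ((WT.node L R).lopts.attach.map fun g => (WT.int t).add (heat t g.1))
         ((WT.node L R).ropts.attach.map fun g => (WT.int (-t)).add (heat t g.1))
termination_by G => sizeOf G
decreasing_by
  all_goals
    first
      | exact sizeOf_lt_of_mem_lopts g.2
      | exact sizeOf_lt_of_mem_ropts g.2

end WT

namespace WT

/-- The extension of a binary function `f` to games: play the two games in parallel and
combine the final scores with `f`. -/
def fext2 (f : ℤ → ℤ → ℤ) (G H : WT) : WT :=
  match G, H with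
  | int m, int n => int (f m n)
  | G, H =>
    node ((G.lopts.attach.map fun g => fext2 f g.1 H) ++ (H.lopts.attach.map fun h => fext2 f G h.1))
         ((G.ropts.attach.map fun g => fext2 f g.1 H) ++ (H.ropts.attach.map fun h => fext2 f G h.1))
termination_by sizeOf G + sizeOf H
decreasing_by
  all_goals
    first
      | (have := sizeOf_lt_of_mem_lopts g.2; omega)
      | (have := sizeOf_lt_of_mem_lopts h.2; omega)
      | (have := sizeOf_lt_of_mem_ropts g.2; omega)
      | (have := sizeOf_lt_of_mem_ropts h.2; omega)

end WT

/-!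
Split `G ≳ H` into two halves, each testing Left-first outcomes in contexts of one temper and
Right-first outcomes in contexts of the other. Each half implies a structural relation:
an outcome inequality, together with an answer to every Left move in `H` and every Right move in
`G` that preserves the relation (with the half switched when the answer is made in the other
game). If an answer is missing, the contexts separating the options assemble into one context
that violates the half; switches `±n` turn Right-first separations into Left-first ones.
The structural relation is in turn a strategy for the extension: comparing `f̃(H, K) + X`
with `f̃(G, K) + X`, moves in `H` and `G` are answered as it prescribes and moves in `K` or `X`
are copied, and once everything is an integer the monotonicity of `f` compares the scores. This
gives `f̃(G₁, K) ≳ f̃(H₁, K)`. Since `f̃(G, H)` and the extension of `(x, y) ↦ f(y, x)` at `(H, G)`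
differ only in the order of options, the same holds in the second argument, and the theorem
follows by transitivity.
-/

namespace WT

theorem lmax_eq_max {l : List ℤ} (hl : l ≠ []) : lmax l = l.max hl := by
  cases l with
  | nil => exact absurd rfl hl
  | cons a l => rfl

theorem lmin_eq_min {l : List ℤ} (hl : l ≠ []) : lmin l = l.min hl := by
  cases l with
  | nil => exact absurd rfl hl
  | cons a l => rfl

theorem le_lmax {l : List ℤ} {x : ℤ} (hx : x ∈ l) : x ≤ lmax l := by
  rw [lmax_eq_max (List.ne_nil_of_mem hx)]
  exact List.le_max_of_mem hx

theorem lmin_le {l : List ℤ} {x : ℤ} (hx : x ∈ l) : lmin l ≤ x := by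
  rw [lmin_eq_min (List.ne_nil_of_mem hx)]
  exact List.min_le_of_mem hx

theorem lmax_le_iff {l : List ℤ} (hl : l ≠ []) {a : ℤ} : lmax l ≤ a ↔ ∀ x ∈ l, x ≤ a := by
  rw [lmax_eq_max hl]
  exact List.max_le_iff hl

theorem le_lmin_iff {l : List ℤ} (hl : l ≠ []) {a : ℤ} : a ≤ lmin l ↔ ∀ x ∈ l, a ≤ x := by
  rw [lmin_eq_min hl]
  exact List.le_min_iff hl

theorem lmax_mem {l : List ℤ} (hl : l ≠ []) : lmax l ∈ l := by
  rw [lmax_eq_max hl]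
  exact List.max_mem hl

theorem lmin_mem {l : List ℤ} (hl : l ≠ []) : lmin l ∈ l := by
  rw [lmin_eq_min hl]
  exact List.min_mem hl

theorem lmax_map_of_monotoneOn {l : List ℤ} {S : Set ℤ} {g : ℤ → ℤ} (hl : l ≠ [])
    (hlS : ∀ x ∈ l, x ∈ S) (hg : MonotoneOn g S) : lmax (l.map g) = g (lmax l) := by
  refine le_antisymm ((lmax_le_iff (by simpa using hl)).2 ?_)
    (le_lmax (List.mem_map_of_mem (lmax_mem hl)))
  simpa using fun x hx => hg (hlS x hx) (hlS _ (lmax_mem hl)) (le_lmax hx)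

theorem lmin_map_of_monotoneOn {l : List ℤ} {S : Set ℤ} {g : ℤ → ℤ} (hl : l ≠ [])
    (hlS : ∀ x ∈ l, x ∈ S) (hg : MonotoneOn g S) : lmin (l.map g) = g (lmin l) := by
  refine le_antisymm (lmin_le (List.mem_map_of_mem (lmin_mem hl)))
    ((le_lmin_iff (by simpa using hl)).2 ?_)
  simpa using fun x hx => hg (hlS _ (lmin_mem hl)) (hlS x hx) (lmin_le hx)

theorem lmax_perm {l l' : List ℤ} (h : l.Perm l') : lmax l = lmax l' := by
  rcases eq_or_ne l [] with rfl | hl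
  · rw [List.nil_perm.1 h]
  have hl' : l' ≠ [] := by rintro rfl; exact hl (List.perm_nil.1 h)
  exact le_antisymm ((lmax_le_iff hl).2 fun x hx => le_lmax (h.subset hx))
    ((lmax_le_iff hl').2 fun x hx => le_lmax (h.symm.subset hx))

theorem lmin_perm {l l' : List ℤ} (h : l.Perm l') : lmin l = lmin l' := by
  rcases eq_or_ne l [] with rfl | hl
  · rw [List.nil_perm.1 h]
  have hl' : l' ≠ [] := by rintro rfl; exact hl (List.perm_nil.1 h)
  exact le_antisymm ((le_lmin_iff hl').2 fun x hx => lmin_le (h.symm.subset hx))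
    ((le_lmin_iff hl).2 fun x hx => lmin_le (h.subset hx))

theorem induction_opts {motive : WT → Prop} (int : ∀ n, motive (int n))
    (node : ∀ L R, (∀ g ∈ L, motive g) → (∀ g ∈ R, motive g) → motive (node L R)) :
    ∀ G, motive G
  | .int n => int n
  | .node L R =>
    node L R (fun g _ => induction_opts int node g) (fun g _ => induction_opts int node g)
decreasing_by
  all_goals
    have := List.sizeOf_lt_of_mem ‹g ∈ _›
    simp only [WT.node.sizeOf_spec]
    omega

theorem fext2_int_int (f : ℤ → ℤ → ℤ) (m n : ℤ) : fext2 f (int m) (int n) = int (f m n) := by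
  rw [fext2]

theorem lopts_fext2 (f : ℤ → ℤ → ℤ) (G H : WT) :
    (fext2 f G H).lopts = G.lopts.map (fext2 f · H) ++ H.lopts.map (fext2 f G ·) := by
  rw [fext2.eq_def]
  split <;> simp [lopts]

theorem ropts_fext2 (f : ℤ → ℤ → ℤ) (G H : WT) :
    (fext2 f G H).ropts = G.ropts.map (fext2 f · H) ++ H.ropts.map (fext2 f G ·) := by
  rw [fext2.eq_def]
  split <;> simp [ropts]

theorem add_eq_fext2 : add = fext2 (· + ·) := by
  funext G H
  induction hn : sizeOf G + sizeOf H using Nat.strong_induction_on generalizing G H with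
  | _ n ih =>
  subst hn
  rw [add.eq_def, fext2.eq_def]
  split
  · rfl
  · congr 1 <;> congr 1 <;> refine List.map_congr_left fun g _ => ih _ ?_ _ _ rfl
    all_goals first
      | have := sizeOf_lt_of_mem_lopts g.2; omega
      | have := sizeOf_lt_of_mem_ropts g.2; omega

theorem Lout_int (n : ℤ) : Lout (int n) = n := by
  rw [Lout, out]

theorem Rout_int (n : ℤ) : Rout (int n) = n := by
  rw [Rout, out]

theorem Lout_node (L R : List WT) : Lout (node L R) = lmax (L.map Rout) := by
  rw [Lout, out]
  simp [lopts]
  rfl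

theorem Rout_node (L R : List WT) : Rout (node L R) = lmin (R.map Lout) := by
  rw [Rout, out]
  simp [ropts]
  rfl

theorem add_int_int (m n : ℤ) : add (int m) (int n) = int (m + n) := by
  rw [add_eq_fext2, fext2_int_int]

theorem lopts_add (G H : WT) :
    (add G H).lopts = G.lopts.map (add · H) ++ H.lopts.map (add G ·) := by
  rw [add_eq_fext2, lopts_fext2]

theorem ropts_add (G H : WT) :
    (add G H).ropts = G.ropts.map (add · H) ++ H.ropts.map (add G ·) := by
  rw [add_eq_fext2, ropts_fext2]

section options

variable {G H g h : WT}

theorem fext2_mem_lopts_left (f : ℤ → ℤ → ℤ) (hg : g ∈ G.lopts) :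
    fext2 f g H ∈ (fext2 f G H).lopts := by
  rw [lopts_fext2]
  exact List.mem_append_left _ (List.mem_map_of_mem hg)

theorem fext2_mem_lopts_right (f : ℤ → ℤ → ℤ) (hh : h ∈ H.lopts) :
    fext2 f G h ∈ (fext2 f G H).lopts := by
  rw [lopts_fext2]
  exact List.mem_append_right _ (List.mem_map_of_mem hh)

theorem fext2_mem_ropts_left (f : ℤ → ℤ → ℤ) (hg : g ∈ G.ropts) :
    fext2 f g H ∈ (fext2 f G H).ropts := by
  rw [ropts_fext2]
  exact List.mem_append_left _ (List.mem_map_of_mem hg)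

theorem fext2_mem_ropts_right (f : ℤ → ℤ → ℤ) (hh : h ∈ H.ropts) :
    fext2 f G h ∈ (fext2 f G H).ropts := by
  rw [ropts_fext2]
  exact List.mem_append_right _ (List.mem_map_of_mem hh)

theorem add_mem_lopts_left (hg : g ∈ G.lopts) : add g H ∈ (add G H).lopts :=
  add_eq_fext2 ▸ fext2_mem_lopts_left _ hg

theorem add_mem_lopts_right (hh : h ∈ H.lopts) : add G h ∈ (add G H).lopts :=
  add_eq_fext2 ▸ fext2_mem_lopts_right _ hh

theorem add_mem_ropts_left (hg : g ∈ G.ropts) : add g H ∈ (add G H).ropts :=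
  add_eq_fext2 ▸ fext2_mem_ropts_left _ hg

theorem add_mem_ropts_right (hh : h ∈ H.ropts) : add G h ∈ (add G H).ropts :=
  add_eq_fext2 ▸ fext2_mem_ropts_right _ hh

end options

section outcomes

variable {A B K k : WT} {a : ℤ}

theorem Lout_eq_lmax (hA : A.lopts ≠ []) : Lout A = lmax (A.lopts.map Rout) := by
  cases A with
  | int n => exact absurd rfl hA
  | node L R => exact Lout_node L R

theorem Rout_eq_lmin (hA : A.ropts ≠ []) : Rout A = lmin (A.ropts.map Lout) := by
  cases A with
  | int n => exact absurd rfl hA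
  | node L R => exact Rout_node L R

theorem Rout_le_Lout_of_mem_lopts (hk : k ∈ K.lopts) : Rout k ≤ Lout K := by
  rw [Lout_eq_lmax (List.ne_nil_of_mem hk)]
  exact le_lmax (List.mem_map_of_mem hk)

theorem Rout_le_Lout_of_mem_ropts (hk : k ∈ K.ropts) : Rout K ≤ Lout k := by
  rw [Rout_eq_lmin (List.ne_nil_of_mem hk)]
  exact lmin_le (List.mem_map_of_mem hk)

theorem Lout_le_iff (hK : K.lopts ≠ []) : Lout K ≤ a ↔ ∀ k ∈ K.lopts, Rout k ≤ a := by
  rw [Lout_eq_lmax hK, lmax_le_iff (by simpa using hK)]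
  simp

theorem le_Rout_iff (hK : K.ropts ≠ []) : a ≤ Rout K ↔ ∀ k ∈ K.ropts, a ≤ Lout k := by
  rw [Rout_eq_lmin hK, le_lmin_iff (by simpa using hK)]
  simp

theorem Lout_le_Lout_of_answers (hA : A.lopts ≠ [])
    (h : ∀ a ∈ A.lopts, (∃ b ∈ B.lopts, Rout a ≤ Rout b) ∨ ∃ a' ∈ a.ropts, Lout a' ≤ Lout B) :
    Lout A ≤ Lout B := by
  refine (Lout_le_iff hA).2 fun a ha => ?_
  rcases h a ha with ⟨b, hb, hab⟩ | ⟨a', ha', hab⟩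
  · exact hab.trans (Rout_le_Lout_of_mem_lopts hb)
  · exact (Rout_le_Lout_of_mem_ropts ha').trans hab

theorem Rout_le_Rout_of_answers (hB : B.ropts ≠ [])
    (h : ∀ b ∈ B.ropts, (∃ a ∈ A.ropts, Lout a ≤ Lout b) ∨ ∃ b' ∈ b.lopts, Rout A ≤ Rout b') :
    Rout A ≤ Rout B := by
  refine (le_Rout_iff hB).2 fun b hb => ?_
  rcases h b hb with ⟨a, ha, hab⟩ | ⟨b', hb', hab⟩
  · exact (Rout_le_Lout_of_mem_ropts ha).trans hab
  · exact hab.trans (Rout_le_Lout_of_mem_lopts hb')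

end outcomes

namespace IsWT

variable {G H g A : WT} {p q : Bool}

theorem of_mem_lopts (hG : IsWT G p) (hg : g ∈ G.lopts) : IsWT g (!p) := by
  cases hG with
  | int => simp [lopts] at hg
  | node _ _ hL => simpa using hL g hg

theorem of_mem_ropts (hG : IsWT G p) (hg : g ∈ G.ropts) : IsWT g (!p) := by
  cases hG with
  | int => simp [ropts] at hg
  | node _ _ _ hR => simpa using hR g hg

theorem eq_int_of_lopts_eq_nil (hG : IsWT G p) (h : G.lopts = []) :
    ∃ n, G = WT.int n ∧ p = false := by
  cases hG with
  | int n => exact ⟨n, rfl, rfl⟩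
  | node hL => exact absurd h hL

theorem eq_int_of_ropts_eq_nil (hG : IsWT G p) (h : G.ropts = []) :
    ∃ n, G = WT.int n ∧ p = false := by
  cases hG with
  | int n => exact ⟨n, rfl, rfl⟩
  | node _ hR => exact absurd h hR

theorem of_opts (hl : A.lopts ≠ []) (hr : A.ropts ≠ []) (hL : ∀ a ∈ A.lopts, IsWT a p)
    (hR : ∀ a ∈ A.ropts, IsWT a p) : IsWT A (!p) := by
  cases A with
  | int n => exact absurd rfl hl
  | node L R => exact .node hl hr hL hR

protected theorem fext2 (f : ℤ → ℤ → ℤ) (hG : IsWT G p) (hH : IsWT H q) :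
    IsWT (fext2 f G H) (p ^^ q) := by
  induction hn : sizeOf G + sizeOf H using Nat.strong_induction_on generalizing G H p q with
  | _ n ih =>
  subst hn
  by_cases hint : G.lopts = [] ∧ H.lopts = []
  · obtain ⟨m, rfl, rfl⟩ := hG.eq_int_of_lopts_eq_nil hint.1
    obtain ⟨n, rfl, rfl⟩ := hH.eq_int_of_lopts_eq_nil hint.2
    rw [fext2_int_int]
    exact .int _
  have hr : ¬(G.ropts = [] ∧ H.ropts = []) := by
    rintro ⟨hG', hH'⟩
    obtain ⟨m, rfl, -⟩ := hG.eq_int_of_ropts_eq_nil hG'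
    obtain ⟨n, rfl, -⟩ := hH.eq_int_of_ropts_eq_nil hH'
    exact hint ⟨rfl, rfl⟩
  have hopt : ∀ g, (g ∈ G.lopts ∨ g ∈ G.ropts) → IsWT (fext2 f g H) (!(p ^^ q)) := by
    rintro g (hg | hg) <;> [have := sizeOf_lt_of_mem_lopts hg; have := sizeOf_lt_of_mem_ropts hg]
    · simpa using ih _ (by omega) (hG.of_mem_lopts hg) hH rfl
    · simpa using ih _ (by omega) (hG.of_mem_ropts hg) hH rfl
  have hopt' : ∀ h, (h ∈ H.lopts ∨ h ∈ H.ropts) → IsWT (fext2 f G h) (!(p ^^ q)) := by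
    rintro h (hh | hh) <;> [have := sizeOf_lt_of_mem_lopts hh; have := sizeOf_lt_of_mem_ropts hh]
    · simpa using ih _ (by omega) hG (hH.of_mem_lopts hh) rfl
    · simpa using ih _ (by omega) hG (hH.of_mem_ropts hh) rfl
  rw [← Bool.not_not (p ^^ q)]
  refine of_opts ?_ ?_ ?_ ?_
  · simpa [lopts_fext2, not_and_or] using hint
  · simpa [ropts_fext2, not_and_or] using hr
  · simp only [lopts_fext2, List.mem_append, List.mem_map]
    rintro _ (⟨g, hg, rfl⟩ | ⟨h, hh, rfl⟩)
    exacts [hopt g (.inl hg), hopt' h (.inl hh)]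
  · simp only [ropts_fext2, List.mem_append, List.mem_map]
    rintro _ (⟨g, hg, rfl⟩ | ⟨h, hh, rfl⟩)
    exacts [hopt g (.inr hg), hopt' h (.inr hh)]

protected theorem add (hG : IsWT G p) (hH : IsWT H q) : IsWT (add G H) (p ^^ q) :=
  add_eq_fext2 ▸ hG.fext2 _ hH

end IsWT

namespace Valued

variable {S : Set ℤ} {G g : WT}

theorem mem_of_int {n : ℤ} (h : Valued S (WT.int n)) : n ∈ S := by
  cases h
  assumption

theorem of_mem_lopts (hG : Valued S G) (hg : g ∈ G.lopts) : Valued S g := by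
  cases hG with
  | int => simp [lopts] at hg
  | node hL => exact hL g hg

theorem of_mem_ropts (hG : Valued S G) (hg : g ∈ G.ropts) : Valued S g := by
  cases hG with
  | int => simp [ropts] at hg
  | node _ hR => exact hR g hg

end Valued

theorem valued_univ (G : WT) : Valued Set.univ G := by
  induction G using induction_opts with
  | int n => exact .int trivial
  | node L R hL hR => exact .node hL hR

open Filter in
theorem eventually_valued_Icc (G : WT) : ∀ᶠ M in atTop, Valued (Set.Icc (-M) M) G := by
  induction G using induction_opts with
  | int n =>
    filter_upwards [eventually_ge_atTop |n|] with M hM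
    exact .int (abs_le.1 hM)
  | node L R hL hR =>
    filter_upwards [L.finite_toSet.eventually_all.2 hL, R.finite_toSet.eventually_all.2 hR]
      with M hLM hRM
    exact .node hLM hRM

namespace IsWT

variable {S : Set ℤ} {G : WT} {p : Bool}

theorem out_mem (hG : IsWT G p) (hv : Valued S G) : Lout G ∈ S ∧ Rout G ∈ S := by
  induction hG with
  | int n => simpa [Lout_int, Rout_int] using hv.mem_of_int
  | @node L R p hL hR _ _ ihL ihR =>
    rw [Lout_node, Rout_node]
    obtain ⟨g, hg, hgl⟩ := List.mem_map.1 (lmax_mem (l := L.map Rout) (by simpa using hL))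
    obtain ⟨g', hg', hgr⟩ := List.mem_map.1 (lmin_mem (l := R.map Lout) (by simpa using hR))
    exact ⟨hgl ▸ (ihL g hg (hv.of_mem_lopts hg)).2, hgr ▸ (ihR g' hg' (hv.of_mem_ropts hg')).1⟩

theorem out_fext2_int {f : ℤ → ℤ → ℤ} {k : ℤ} (hG : IsWT G p) (hv : Valued S G)
    (hf : MonotoneOn (f · k) S) :
    Lout (fext2 f G (WT.int k)) = f (Lout G) k ∧ Rout (fext2 f G (WT.int k)) = f (Rout G) k := by
  induction hG with
  | int n => simp [fext2_int_int, Lout_int, Rout_int]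
  | @node L R p hL hR hLw hRw ihL ihR =>
    have hlo : (fext2 f (WT.node L R) (WT.int k)).lopts = L.map (fext2 f · (WT.int k)) := by
      rw [lopts_fext2]; simp [lopts]
    have hro : (fext2 f (WT.node L R) (WT.int k)).ropts = R.map (fext2 f · (WT.int k)) := by
      rw [ropts_fext2]; simp [ropts]
    have hLS : ∀ x ∈ L.map Rout, x ∈ S := by
      simpa using fun g hg => ((hLw g hg).out_mem (hv.of_mem_lopts hg)).2
    have hRS : ∀ x ∈ R.map Lout, x ∈ S := by
      simpa using fun g hg => ((hRw g hg).out_mem (hv.of_mem_ropts hg)).1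
    rw [Lout_eq_lmax (by simpa [hlo] using hL), Rout_eq_lmin (by simpa [hro] using hR), hlo, hro,
      Lout_node, Rout_node, ← lmax_map_of_monotoneOn (by simpa using hL) hLS hf,
      ← lmin_map_of_monotoneOn (by simpa using hR) hRS hf]
    simp only [List.map_map]
    constructor <;> refine congrArg _ (List.map_congr_left fun g hg => ?_)
    · exact (ihL g hg (hv.of_mem_lopts hg)).2
    · exact (ihR g hg (hv.of_mem_ropts hg)).1

theorem Lout_add_int (hG : IsWT G p) (c : ℤ) : Lout (add G (WT.int c)) = Lout G + c := by
  rw [add_eq_fext2]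
  exact (hG.out_fext2_int (f := (· + ·)) (valued_univ G)
    ((monotone_id.add_const c).monotoneOn _)).1

theorem Rout_add_int (hG : IsWT G p) (c : ℤ) : Rout (add G (WT.int c)) = Rout G + c := by
  rw [add_eq_fext2]
  exact (hG.out_fext2_int (f := (· + ·)) (valued_univ G)
    ((monotone_id.add_const c).monotoneOn _)).2

end IsWT

theorem fext2_eq_int {f : ℤ → ℤ → ℤ} {G H : WT} {n : ℤ} (h : fext2 f G H = int n) :
    ∃ a b, G = int a ∧ H = int b := by
  rw [fext2.eq_def] at h
  split at h
  · exact ⟨_, _, rfl, rfl⟩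
  · exact absurd h WT.noConfusion

theorem add_eq_int {G H : WT} {n : ℤ} (h : add G H = int n) : ∃ a b, G = int a ∧ H = int b :=
  fext2_eq_int (add_eq_fext2 ▸ h)

theorem eq_of_opts_eq {A B : WT} (hA : ∀ n, A ≠ int n) (hB : ∀ n, B ≠ int n)
    (hl : A.lopts = B.lopts) (hr : A.ropts = B.ropts) : A = B := by
  cases A with
  | int n => exact absurd rfl (hA n)
  | node L R =>
    cases B with
    | int n => exact absurd rfl (hB n)
    | node L' R' => exact congrArg₂ node hl hr

protected theorem add_assoc (G H K : WT) : add (add G H) K = add G (add H K) := by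
  induction hn : sizeOf G + sizeOf H + sizeOf K using Nat.strong_induction_on
    generalizing G H K with
  | _ n ih =>
  subst hn
  by_cases hint : (∃ a, G = int a) ∧ (∃ b, H = int b) ∧ ∃ c, K = int c
  · obtain ⟨⟨a, rfl⟩, ⟨b, rfl⟩, ⟨c, rfl⟩⟩ := hint
    simp only [add_int_int, _root_.add_assoc]
  refine eq_of_opts_eq (fun n h => ?_) (fun n h => ?_) ?_ ?_
  · obtain ⟨_, c, hGH, rfl⟩ := add_eq_int h
    obtain ⟨a, b, rfl, rfl⟩ := add_eq_int hGH
    exact hint ⟨⟨a, rfl⟩, ⟨b, rfl⟩, ⟨c, rfl⟩⟩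
  · obtain ⟨a, _, rfl, hHK⟩ := add_eq_int h
    obtain ⟨b, c, rfl, rfl⟩ := add_eq_int hHK
    exact hint ⟨⟨a, rfl⟩, ⟨b, rfl⟩, ⟨c, rfl⟩⟩
  all_goals
    simp only [lopts_add, ropts_add, List.map_append, List.map_map, List.append_assoc]
    refine congrArg₂ (· ++ ·) ?_ (congrArg₂ (· ++ ·) ?_ ?_)
    all_goals refine List.map_congr_left fun g hg => ih _ ?_ _ _ _ rfl
    all_goals first
      | have := sizeOf_lt_of_mem_lopts hg; omega
      | have := sizeOf_lt_of_mem_ropts hg; omega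

def switch (n : ℤ) : WT := node [int n] [int (-n)]

theorem isWT_switch (n : ℤ) : IsWT (switch n) true :=
  .node (p := false) (by simp) (by simp) (by simp [IsWT.int]) (by simp [IsWT.int])

section switch

variable {W : WT} {p : Bool} {n : ℤ}

theorem IsWT.le_Lout_add_switch (hW : IsWT W p) (n : ℤ) :
    Rout W + n ≤ Lout (add W (switch n)) := by
  rw [← hW.Rout_add_int]
  exact Rout_le_Lout_of_mem_lopts (add_mem_lopts_right (by simp [switch, lopts]))

theorem IsWT.Rout_add_switch_le (hW : IsWT W p) (n : ℤ) :
    Rout (add W (switch n)) ≤ Lout W - n := by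
  rw [sub_eq_add_neg, ← hW.Lout_add_int]
  exact Rout_le_Lout_of_mem_ropts (add_mem_ropts_right (by simp [switch, ropts]))

/-- A switch larger than every score of `W` is urgent: whoever moves first takes it. -/
theorem IsWT.Lout_add_switch (hW : IsWT W p) (hv : Valued (Set.Icc (-n) n) W) :
    Lout (add W (switch n)) = Rout W + n := by
  have hne : (add W (switch n)).lopts ≠ [] := by
    rw [lopts_add]; simp [switch, lopts]
  refine le_antisymm ((Lout_le_iff hne).2 ?_) (hW.le_Lout_add_switch n)
  simp only [lopts_add, List.forall_mem_append, List.forall_mem_map]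
  refine ⟨fun w hw => ?_, by simp [switch, lopts, hW.Rout_add_int]⟩
  have hw' := hW.of_mem_lopts hw
  have := hw'.Rout_add_switch_le n
  have := (hw'.out_mem (hv.of_mem_lopts hw)).1.2
  have := (hW.out_mem hv).2.1
  omega

theorem IsWT.Rout_add_switch (hW : IsWT W p) (hv : Valued (Set.Icc (-n) n) W) :
    Rout (add W (switch n)) = Lout W - n := by
  have hne : (add W (switch n)).ropts ≠ [] := by
    rw [ropts_add]; simp [switch, ropts]
  refine le_antisymm (hW.Rout_add_switch_le n) ((le_Rout_iff hne).2 ?_)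
  simp only [ropts_add, List.forall_mem_append, List.forall_mem_map]
  refine ⟨fun w hw => ?_, by simp [switch, ropts, hW.Lout_add_int, sub_eq_add_neg]⟩
  have hw' := hW.of_mem_ropts hw
  have := hw'.le_Lout_add_switch n
  have := (hw'.out_mem (hv.of_mem_ropts hw)).2.1
  have := (hW.out_mem hv).1.2
  omega

end switch

def LSep (s : Bool) (P Q : WT) : Prop :=
  ∃ T, IsWT T s ∧ Lout (add P T) < 0 ∧ 0 ≤ Lout (add Q T)

def RSep (s : Bool) (P Q : WT) : Prop :=
  ∃ U, IsWT U s ∧ Rout (add P U) < 0 ∧ 0 ≤ Rout (add Q U)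

def HalfGe (b : Bool) (G H : WT) : Prop :=
  ∀ X r, IsWT X r →
    (r = !b → Lout (add H X) ≤ Lout (add G X)) ∧ (r = b → Rout (add H X) ≤ Rout (add G X))

theorem Ge.halfGe {G H : WT} (h : Ge G H) (b : Bool) : HalfGe b G H :=
  fun X r hX => ⟨fun _ => (h X ⟨r, hX⟩).1, fun _ => (h X ⟨r, hX⟩).2⟩

section separation

variable {P Q Y : WT} {p q s b : Bool}

theorem lSep_of_Lout_lt (hP : IsWT P p) (hQ : IsWT Q q) (hY : IsWT Y s)
    (h : Lout (add P Y) < Lout (add Q Y)) : LSep s P Q := by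
  refine ⟨add Y (int (-1 - Lout (add P Y))), by simpa using hY.add (.int _), ?_, ?_⟩
  · rw [← WT.add_assoc, (hP.add hY).Lout_add_int]; omega
  · rw [← WT.add_assoc, (hQ.add hY).Lout_add_int]; omega

theorem rSep_of_Rout_lt (hP : IsWT P p) (hQ : IsWT Q q) (hY : IsWT Y s)
    (h : Rout (add P Y) < Rout (add Q Y)) : RSep s P Q := by
  refine ⟨add Y (int (-1 - Rout (add P Y))), by simpa using hY.add (.int _), ?_, ?_⟩
  · rw [← WT.add_assoc, (hP.add hY).Rout_add_int]; omega
  · rw [← WT.add_assoc, (hQ.add hY).Rout_add_int]; omega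

theorem lSep_of_Rout_lt (hP : IsWT P p) (hQ : IsWT Q q) (hY : IsWT Y s)
    (h : Rout (add P Y) < Rout (add Q Y)) : LSep (!s) P Q := by
  obtain ⟨n, hPn, hQn⟩ :=
    ((eventually_valued_Icc (add P Y)).and (eventually_valued_Icc (add Q Y))).exists
  refine lSep_of_Lout_lt hP hQ (by simpa using hY.add (isWT_switch n)) ?_
  rw [← WT.add_assoc, ← WT.add_assoc, (hP.add hY).Lout_add_switch hPn,
    (hQ.add hY).Lout_add_switch hQn]
  omega

theorem rSep_of_Lout_lt (hP : IsWT P p) (hQ : IsWT Q q) (hY : IsWT Y s)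
    (h : Lout (add P Y) < Lout (add Q Y)) : RSep (!s) P Q := by
  obtain ⟨n, hPn, hQn⟩ :=
    ((eventually_valued_Icc (add P Y)).and (eventually_valued_Icc (add Q Y))).exists
  refine rSep_of_Rout_lt hP hQ (by simpa using hY.add (isWT_switch n)) ?_
  rw [← WT.add_assoc, ← WT.add_assoc, (hP.add hY).Rout_add_switch hPn,
    (hQ.add hY).Rout_add_switch hQn]
  omega

theorem lSep_of_not_halfGe (hP : IsWT P p) (hQ : IsWT Q q) (h : ¬HalfGe b P Q) :
    LSep (!b) P Q := by
  simp only [HalfGe, not_forall, not_and_or, not_le] at h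
  obtain ⟨X, r, hX, ⟨rfl, h⟩ | ⟨rfl, h⟩⟩ := h
  · exact lSep_of_Lout_lt hP hQ hX h
  · exact lSep_of_Rout_lt hP hQ hX h

theorem rSep_of_not_halfGe (hP : IsWT P p) (hQ : IsWT Q q) (h : ¬HalfGe b P Q) :
    RSep b P Q := by
  simp only [HalfGe, not_forall, not_and_or, not_le] at h
  obtain ⟨X, r, hX, ⟨rfl, h⟩ | ⟨rfl, h⟩⟩ := h
  · simpa using rSep_of_Lout_lt hP hQ hX h
  · exact rSep_of_Rout_lt hP hQ hX h

theorem exists_nonneg_Lout_add (hQ : IsWT Q q) (s : Bool) :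
    ∃ T, IsWT T s ∧ 0 ≤ Lout (add Q T) := by
  cases s
  · exact ⟨int (-Lout Q), .int _, by rw [hQ.Lout_add_int]; omega⟩
  · exact ⟨switch (-Rout Q), isWT_switch _, by have := hQ.le_Lout_add_switch (-Rout Q); omega⟩

theorem exists_Rout_add_neg (hP : IsWT P p) (s : Bool) :
    ∃ U, IsWT U s ∧ Rout (add P U) < 0 := by
  cases s
  · exact ⟨int (-Rout P - 1), .int _, by rw [hP.Rout_add_int]; omega⟩
  · refine ⟨switch (Lout P + 1), isWT_switch _, ?_⟩
    have := hP.Rout_add_switch_le (Lout P + 1)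
    omega

/-- The context `X = {U₀, U q' | T₀, T g}` assembled from separating contexts of the options: in
`P + X` every Left move is punished by Right moving to a `T`, while in `Q + X` every Right move
is punished by Left moving to a `U`. -/
theorem exists_separating_context (hP : IsWT P p) (hQ : IsWT Q q)
    (hT : ∀ g ∈ P.lopts, LSep s g Q) (hU : ∀ q' ∈ Q.ropts, RSep s P q') :
    ∃ X, IsWT X (!s) ∧ Lout (add P X) < 0 ∧ 0 ≤ Rout (add Q X) := by
  choose! T hTs hTP hTQ using hT
  choose! U hUs hUP hUQ using hU
  obtain ⟨T₀, hT₀s, hT₀Q⟩ := exists_nonneg_Lout_add hQ s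
  obtain ⟨U₀, hU₀s, hU₀P⟩ := exists_Rout_add_neg hP s
  set X := node (U₀ :: Q.ropts.map U) (T₀ :: P.lopts.map T)
  have hXl : X.lopts = U₀ :: Q.ropts.map U := rfl
  have hXr : X.ropts = T₀ :: P.lopts.map T := rfl
  have hTX : ∀ g ∈ P.lopts, T g ∈ X.ropts :=
    fun g hg => hXr ▸ List.mem_cons_of_mem _ (List.mem_map_of_mem hg)
  have hUX : ∀ q' ∈ Q.ropts, U q' ∈ X.lopts :=
    fun q' hq' => hXl ▸ List.mem_cons_of_mem _ (List.mem_map_of_mem hq')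
  refine ⟨X, .node (by simp) (by simp) (by simpa using ⟨hU₀s, hUs⟩) (by simpa using ⟨hT₀s, hTs⟩),
    ?_, ?_⟩
  · suffices Lout (add P X) ≤ -1 by omega
    have hne := List.ne_nil_of_mem (add_mem_lopts_right (G := P) (hXl ▸ List.mem_cons_self))
    refine (Lout_le_iff hne).2 ?_
    simp only [lopts_add, hXl, List.forall_mem_append, List.forall_mem_map, List.forall_mem_cons]
    refine ⟨fun g hg => ?_, by omega, fun q' hq' => by have := hUP q' hq'; omega⟩
    have := Rout_le_Lout_of_mem_ropts (add_mem_ropts_right (G := g) (hTX g hg))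
    have := hTP g hg
    omega
  · have hne := List.ne_nil_of_mem (add_mem_ropts_right (G := Q) (hXr ▸ List.mem_cons_self))
    refine (le_Rout_iff hne).2 ?_
    simp only [ropts_add, hXr, List.forall_mem_append, List.forall_mem_map, List.forall_mem_cons]
    refine ⟨fun q' hq' => ?_, hT₀Q, hTQ⟩
    have := Rout_le_Lout_of_mem_lopts (add_mem_lopts_right (G := q') (hUX q' hq'))
    have := hUQ q' hq'
    omega

end separation

mutual

/-- A move-by-move form of `HalfGe b G H`. -/
inductive Dom : Bool → WT → WT → Prop
  | mk {b : Bool} {G H : WT} : cond b (Lout H ≤ Lout G) (Rout H ≤ Rout G) →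
      (∀ h ∈ H.lopts, ReplyL b G h) → (∀ g ∈ G.ropts, ReplyR b g H) → Dom b G H

inductive ReplyL : Bool → WT → WT → Prop
  | lopt {b : Bool} {G h g : WT} : g ∈ G.lopts → Dom (!b) g h → ReplyL b G h
  | ropt {b : Bool} {G h h' : WT} : h' ∈ h.ropts → Dom b G h' → ReplyL b G h

inductive ReplyR : Bool → WT → WT → Prop
  | ropt {b : Bool} {g H h : WT} : h ∈ H.ropts → Dom (!b) g h → ReplyR b g H
  | lopt {b : Bool} {g H g' : WT} : g' ∈ g.lopts → Dom b g' H → ReplyR b g H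

end

theorem HalfGe.dom {G H : WT} {p q b : Bool} (hG : IsWT G p) (hH : IsWT H q)
    (h : HalfGe b G H) : Dom b G H := by
  induction hn : sizeOf G + sizeOf H using Nat.strong_induction_on generalizing G H p q b with
  | _ n ih =>
  subst hn
  refine .mk ?_ (fun h' hh' => ?_) (fun g hg => ?_)
  · have h0 := h (int 0) false (.int 0)
    cases b
    · simpa [hG.Rout_add_int, hH.Rout_add_int] using h0.2 rfl
    · simpa [hG.Lout_add_int, hH.Lout_add_int] using h0.1 rfl
  · by_contra hc
    have hh'w := hH.of_mem_lopts hh'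
    have := sizeOf_lt_of_mem_lopts hh'
    obtain ⟨X, hX, hGX, hh'X⟩ := exists_separating_context (s := b) hG hh'w
      (fun g hg => by
        have := sizeOf_lt_of_mem_lopts hg
        simpa using lSep_of_not_halfGe (hG.of_mem_lopts hg) hh'w
          fun hge => hc (.lopt hg (ih _ (by omega) (hG.of_mem_lopts hg) hh'w hge rfl)))
      (fun h'' hh'' => by
        have := sizeOf_lt_of_mem_ropts hh''
        exact rSep_of_not_halfGe hG (hh'w.of_mem_ropts hh'')
          fun hge => hc (.ropt hh'' (ih _ (by omega) hG (hh'w.of_mem_ropts hh'') hge rfl)))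
    have := (h X _ hX).1 rfl
    have := Rout_le_Lout_of_mem_lopts (add_mem_lopts_left hh' (H := X))
    omega
  · by_contra hc
    have hgw := hG.of_mem_ropts hg
    have := sizeOf_lt_of_mem_ropts hg
    obtain ⟨X, hX, hgX, hHX⟩ := exists_separating_context (s := !b) hgw hH
      (fun g' hg' => by
        have := sizeOf_lt_of_mem_lopts hg'
        exact lSep_of_not_halfGe (hgw.of_mem_lopts hg') hH
          fun hge => hc (.lopt hg' (ih _ (by omega) (hgw.of_mem_lopts hg') hH hge rfl)))
      (fun h'' hh'' => by
        have := sizeOf_lt_of_mem_ropts hh''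
        exact rSep_of_not_halfGe hgw (hH.of_mem_ropts hh'')
          fun hge => hc (.ropt hh'' (ih _ (by omega) hgw (hH.of_mem_ropts hh'') hge rfl)))
    have := (h X _ (by simpa using hX)).2 rfl
    have := Rout_le_Lout_of_mem_ropts (add_mem_ropts_left hg (H := X))
    omega

section soundness

variable {S₁ S₂ : Set ℤ} {f : ℤ → ℤ → ℤ}

/-- The temper of `K + X` plays the role of the temper of the context in `HalfGe b`. -/
def SoundAt (S₁ S₂ : Set ℤ) (f : ℤ → ℤ → ℤ) (G H K X : WT) : Prop :=
  ∀ ⦃b p q pK r : Bool⦄, IsWT G p → IsWT H q → IsWT K pK → IsWT X r →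
    Valued S₁ G → Valued S₁ H → Valued S₂ K → Dom b G H →
    ((pK ^^ r) = !b → Lout (add (fext2 f H K) X) ≤ Lout (add (fext2 f G K) X)) ∧
    ((pK ^^ r) = b → Rout (add (fext2 f H K) X) ≤ Rout (add (fext2 f G K) X))

variable {G H K X : WT} {b p q pK r : Bool}

theorem Lout_le_of_forall_soundAt (hf : ∀ k ∈ S₂, MonotoneOn (f · k) S₁)
    (ih : ∀ G' H' K' X', sizeOf G' + sizeOf H' + sizeOf K' + sizeOf X' <
      sizeOf G + sizeOf H + sizeOf K + sizeOf X → SoundAt S₁ S₂ f G' H' K' X')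
    (hG : IsWT G p) (hH : IsWT H q) (hK : IsWT K pK) (hX : IsWT X r)
    (hvG : Valued S₁ G) (hvH : Valued S₁ H) (hvK : Valued S₂ K) (hd : Dom b G H)
    (hb : (pK ^^ r) = !b) : Lout (add (fext2 f H K) X) ≤ Lout (add (fext2 f G K) X) := by
  obtain ⟨hout, hreply, -⟩ := id hd
  by_cases hA : (add (fext2 f H K) X).lopts = []
  · simp only [lopts_add, lopts_fext2, List.append_eq_nil_iff, List.map_eq_nil_iff] at hA
    obtain ⟨m, rfl, rfl⟩ := hH.eq_int_of_lopts_eq_nil hA.1.1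
    obtain ⟨k, rfl, rfl⟩ := hK.eq_int_of_lopts_eq_nil hA.1.2
    obtain ⟨c, rfl, rfl⟩ := hX.eq_int_of_lopts_eq_nil hA.2
    obtain rfl : b = true := by simpa using hb
    rw [fext2_int_int, add_int_int, Lout_int, (hG.fext2 f (.int k)).Lout_add_int,
      (hG.out_fext2_int hvG (hf k hvK.mem_of_int)).1]
    have : f m k ≤ f (Lout G) k :=
      hf k hvK.mem_of_int hvH.mem_of_int (hG.out_mem hvG).1 (by simpa [Lout_int] using hout)
    omega
  refine Lout_le_Lout_of_answers hA ?_
  rw [lopts_add (fext2 f H K), lopts_fext2 f H K]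
  simp only [List.map_append, List.forall_mem_append, List.forall_mem_map]
  refine ⟨⟨fun h hh => ?_, fun k hk => ?_⟩, fun x hx => .inl ⟨_, add_mem_lopts_right hx, ?_⟩⟩
  · have := sizeOf_lt_of_mem_lopts hh
    cases hreply h hh with
    | lopt hg hd' =>
      have := sizeOf_lt_of_mem_lopts hg
      exact .inl ⟨_, add_mem_lopts_left (fext2_mem_lopts_left f hg),
        (ih _ _ _ _ (by omega) (hG.of_mem_lopts hg) (hH.of_mem_lopts hh) hK hX
          (hvG.of_mem_lopts hg) (hvH.of_mem_lopts hh) hvK hd').2 hb⟩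
    | ropt hh' hd' =>
      have := sizeOf_lt_of_mem_ropts hh'
      exact .inr ⟨_, add_mem_ropts_left (fext2_mem_ropts_left f hh'),
        (ih _ _ _ _ (by omega) hG ((hH.of_mem_lopts hh).of_mem_ropts hh') hK hX hvG
          ((hvH.of_mem_lopts hh).of_mem_ropts hh') hvK hd').1 hb⟩
  · have := sizeOf_lt_of_mem_lopts hk
    refine .inl ⟨_, add_mem_lopts_left (fext2_mem_lopts_right f hk), ?_⟩
    exact (ih _ _ _ _ (by omega) hG hH (hK.of_mem_lopts hk) hX hvG hvH (hvK.of_mem_lopts hk)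
      hd).2 (by rw [Bool.not_xor, hb, Bool.not_not])
  · have := sizeOf_lt_of_mem_lopts hx
    exact (ih _ _ _ _ (by omega) hG hH hK (hX.of_mem_lopts hx) hvG hvH hvK hd).2
      (by rw [Bool.xor_not, hb, Bool.not_not])

theorem Rout_le_of_forall_soundAt (hf : ∀ k ∈ S₂, MonotoneOn (f · k) S₁)
    (ih : ∀ G' H' K' X', sizeOf G' + sizeOf H' + sizeOf K' + sizeOf X' <
      sizeOf G + sizeOf H + sizeOf K + sizeOf X → SoundAt S₁ S₂ f G' H' K' X')
    (hG : IsWT G p) (hH : IsWT H q) (hK : IsWT K pK) (hX : IsWT X r)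
    (hvG : Valued S₁ G) (hvH : Valued S₁ H) (hvK : Valued S₂ K) (hd : Dom b G H)
    (hb : (pK ^^ r) = b) : Rout (add (fext2 f H K) X) ≤ Rout (add (fext2 f G K) X) := by
  obtain ⟨hout, -, hreply⟩ := id hd
  by_cases hB : (add (fext2 f G K) X).ropts = []
  · simp only [ropts_add, ropts_fext2, List.append_eq_nil_iff, List.map_eq_nil_iff] at hB
    obtain ⟨m, rfl, rfl⟩ := hG.eq_int_of_ropts_eq_nil hB.1.1
    obtain ⟨k, rfl, rfl⟩ := hK.eq_int_of_ropts_eq_nil hB.1.2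
    obtain ⟨c, rfl, rfl⟩ := hX.eq_int_of_ropts_eq_nil hB.2
    obtain rfl : b = false := by simpa using hb.symm
    rw [fext2_int_int, add_int_int, Rout_int, (hH.fext2 f (.int k)).Rout_add_int,
      (hH.out_fext2_int hvH (hf k hvK.mem_of_int)).2]
    have : f (Rout H) k ≤ f m k :=
      hf k hvK.mem_of_int (hH.out_mem hvH).2 hvG.mem_of_int (by simpa [Rout_int] using hout)
    omega
  refine Rout_le_Rout_of_answers hB ?_
  rw [ropts_add (fext2 f G K), ropts_fext2 f G K]
  simp only [List.map_append, List.forall_mem_append, List.forall_mem_map]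
  refine ⟨⟨fun g hg => ?_, fun k hk => ?_⟩, fun x hx => .inl ⟨_, add_mem_ropts_right hx, ?_⟩⟩
  · have := sizeOf_lt_of_mem_ropts hg
    cases hreply g hg with
    | ropt hh hd' =>
      have := sizeOf_lt_of_mem_ropts hh
      exact .inl ⟨_, add_mem_ropts_left (fext2_mem_ropts_left f hh),
        (ih _ _ _ _ (by omega) (hG.of_mem_ropts hg) (hH.of_mem_ropts hh) hK hX
          (hvG.of_mem_ropts hg) (hvH.of_mem_ropts hh) hvK hd').1 (by rw [hb, Bool.not_not])⟩
    | lopt hg' hd' =>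
      have := sizeOf_lt_of_mem_lopts hg'
      exact .inr ⟨_, add_mem_lopts_left (fext2_mem_lopts_left f hg'),
        (ih _ _ _ _ (by omega) ((hG.of_mem_ropts hg).of_mem_lopts hg') hH hK hX
          ((hvG.of_mem_ropts hg).of_mem_lopts hg') hvH hvK hd').2 hb⟩
  · have := sizeOf_lt_of_mem_ropts hk
    refine .inl ⟨_, add_mem_ropts_left (fext2_mem_ropts_right f hk), ?_⟩
    exact (ih _ _ _ _ (by omega) hG hH (hK.of_mem_ropts hk) hX hvG hvH (hvK.of_mem_ropts hk)
      hd).1 (by rw [Bool.not_xor, hb])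
  · have := sizeOf_lt_of_mem_ropts hx
    exact (ih _ _ _ _ (by omega) hG hH hK (hX.of_mem_ropts hx) hvG hvH hvK hd).1
      (by rw [Bool.xor_not, hb])

theorem soundAt (hf : ∀ k ∈ S₂, MonotoneOn (f · k) S₁) (G H K X : WT) :
    SoundAt S₁ S₂ f G H K X := by
  induction hn : sizeOf G + sizeOf H + sizeOf K + sizeOf X using Nat.strong_induction_on
    generalizing G H K X with
  | _ n ih =>
  subst hn
  have ih' := fun G' H' K' X' hlt => ih _ hlt G' H' K' X' rfl
  exact fun _ _ _ _ _ hG hH hK hX hvG hvH hvK hd =>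
    ⟨Lout_le_of_forall_soundAt hf ih' hG hH hK hX hvG hvH hvK hd,
      Rout_le_of_forall_soundAt hf ih' hG hH hK hX hvG hvH hvK hd⟩

end soundness

theorem out_eq_of_perm {A B : WT} (hA : ∀ n, A ≠ int n) (hB : ∀ n, B ≠ int n)
    (hl : (A.lopts.map out).Perm (B.lopts.map out))
    (hr : (A.ropts.map out).Perm (B.ropts.map out)) : out A = out B := by
  cases A with
  | int n => exact absurd rfl (hA n)
  | node L R =>
    cases B with
    | int n => exact absurd rfl (hB n)
    | node L' R' =>
      refine Prod.ext (show Lout _ = Lout _ from ?_) (show Rout _ = Rout _ from ?_)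
      · rw [Lout_node, Lout_node]
        have := lmax_perm (hl.map Prod.snd)
        rw [List.map_map, List.map_map] at this
        exact this
      · rw [Rout_node, Rout_node]
        have := lmin_perm (hr.map Prod.fst)
        rw [List.map_map, List.map_map] at this
        exact this

theorem out_add_fext2_swap (f : ℤ → ℤ → ℤ) (G H X : WT) :
    out (add (fext2 f G H) X) = out (add (fext2 (Function.swap f) H G) X) := by
  induction hn : sizeOf G + sizeOf H + sizeOf X using Nat.strong_induction_on
    generalizing G H X with
  | _ n ih =>
  subst hn
  by_cases hint : (∃ a, G = int a) ∧ (∃ b, H = int b) ∧ ∃ c, X = int c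
  · obtain ⟨⟨a, rfl⟩, ⟨b, rfl⟩, ⟨c, rfl⟩⟩ := hint
    rw [fext2_int_int, fext2_int_int]
  refine out_eq_of_perm (fun n h => ?_) (fun n h => ?_) ?_ ?_
  · obtain ⟨_, c, hF, rfl⟩ := add_eq_int h
    obtain ⟨a, b, rfl, rfl⟩ := fext2_eq_int hF
    exact hint ⟨⟨a, rfl⟩, ⟨b, rfl⟩, ⟨c, rfl⟩⟩
  · obtain ⟨_, c, hF, rfl⟩ := add_eq_int h
    obtain ⟨b, a, rfl, rfl⟩ := fext2_eq_int hF
    exact hint ⟨⟨a, rfl⟩, ⟨b, rfl⟩, ⟨c, rfl⟩⟩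
  all_goals
    simp only [lopts_add, ropts_add, lopts_fext2, ropts_fext2, List.map_append, List.map_map]
    refine .append (List.perm_append_comm.trans (.append (.of_eq ?_) (.of_eq ?_))) (.of_eq ?_)
    all_goals refine List.map_congr_left fun x hx => ih _ ?_ _ _ _ rfl
    all_goals first
      | have := sizeOf_lt_of_mem_lopts hx; omega
      | have := sizeOf_lt_of_mem_ropts hx; omega

theorem equiv_fext2_swap (f : ℤ → ℤ → ℤ) (G H : WT) :
    Equiv (fext2 f G H) (fext2 (Function.swap f) H G) := fun X _ =>
  ⟨congrArg Prod.fst (out_add_fext2_swap f G H X), congrArg Prod.snd (out_add_fext2_swap f G H X)⟩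

theorem Ge.trans {A B C : WT} (hAB : Ge A B) (hBC : Ge B C) : Ge A C := fun X hX =>
  ⟨(hBC X hX).1.trans (hAB X hX).1, (hBC X hX).2.trans (hAB X hX).2⟩

theorem Ge.of_equiv {A A' B B' : WT} (h : Ge A B) (hA : Equiv A A') (hB : Equiv B B') :
    Ge A' B' := fun X hX =>
  ⟨(hB X hX).1 ▸ (hA X hX).1 ▸ (h X hX).1, (hB X hX).2 ▸ (hA X hX).2 ▸ (h X hX).2⟩

theorem Ge.fext2_left {S₁ S₂ : Set ℤ} {f : ℤ → ℤ → ℤ} (hf : ∀ k ∈ S₂, MonotoneOn (f · k) S₁)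
    {G H K : WT} {p q pK : Bool} (hG : IsWT G p) (hH : IsWT H q) (hK : IsWT K pK)
    (hvG : Valued S₁ G) (hvH : Valued S₁ H) (hvK : Valued S₂ K) (h : Ge G H) :
    Ge (fext2 f G K) (fext2 f H K) := by
  rintro X ⟨r, hX⟩
  have hdom (b : Bool) := (h.halfGe b).dom hG hH
  exact ⟨(soundAt hf G H K X hG hH hK hX hvG hvH hvK (hdom _)).1 (Bool.not_not _).symm,
    (soundAt hf G H K X hG hH hK hX hvG hvH hvK (hdom _)).2 rfl⟩

end WT

/-- if f : S₁ × S₂ → ℤ is order-preserving, G₁ ≳ H₁ (S₁-valued) and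
G₂ ≳ H₂ (S₂-valued), then f̃(G₁,G₂) ≳ f̃(H₁,H₂). -/
theorem fext2_monotone (S₁ S₂ : Set ℤ) (f : ℤ → ℤ → ℤ)
    (hf : ∀ x x' y y', x ∈ S₁ → x' ∈ S₁ → y ∈ S₂ → y' ∈ S₂ → x ≤ x' → y ≤ y' →
      f x y ≤ f x' y')
    (G₁ H₁ G₂ H₂ : WT) (hG₁ : G₁.Wt) (hH₁ : H₁.Wt) (hG₂ : G₂.Wt) (hH₂ : H₂.Wt)
    (hvG₁ : G₁.Valued S₁) (hvH₁ : H₁.Valued S₁) (hvG₂ : G₂.Valued S₂) (hvH₂ : H₂.Valued S₂)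
    (h₁ : WT.Ge G₁ H₁) (h₂ : WT.Ge G₂ H₂) :
    WT.Ge (WT.fext2 f G₁ G₂) (WT.fext2 f H₁ H₂) := by
  obtain ⟨_, hG₁⟩ := hG₁
  obtain ⟨_, hH₁⟩ := hH₁
  obtain ⟨_, hG₂⟩ := hG₂
  obtain ⟨_, hH₂⟩ := hH₂
  have hf₁ : ∀ y ∈ S₂, MonotoneOn (f · y) S₁ :=
    fun y hy x hx x' hx' hxx' => hf x x' y y hx hx' hy hy hxx' le_rfl
  have hf₂ : ∀ x ∈ S₁, MonotoneOn (f x ·) S₂ :=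
    fun x hx y hy y' hy' hyy' => hf x x y y' hx hx hy hy' le_rfl hyy'
  have step₁ : WT.Ge (WT.fext2 f G₁ G₂) (WT.fext2 f H₁ G₂) :=
    h₁.fext2_left hf₁ hG₁ hH₁ hG₂ hvG₁ hvH₁ hvG₂
  have step₂ : WT.Ge (WT.fext2 f H₁ G₂) (WT.fext2 f H₁ H₂) :=
    (h₂.fext2_left (f := Function.swap f) hf₂ hG₂ hH₂ hH₁ hvG₂ hvH₂ hvH₁).of_equiv
      (WT.equiv_fext2_swap _ G₂ H₁) (WT.equiv_fext2_swap _ H₂ H₁)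
  exact step₁.trans step₂
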